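/- arXiv:1904.00992 — 4 statements merged into one kernel-verified Lean document; each statement's English description precedes it below -/
import Mathlib

section
/- Let $\nu>0$, $\lambda\in\mathbb{R}$, $m\in\mathbb{R}$, and define $\theta(x,t)=\frac{\sqrt{\nu}}{\sqrt{2(t+1)}}\left(e^{m/\nu}-1\right)e^{-\frac{(x-\lambda(t+1))^2}{2\nu(t+1)}}\left[\sqrt{\pi}+\left(e^{m/\nu}-1\right)\int_{\frac{x-\lambda(t+1)}{\sqrt{2\nu(t+1)}}}^{\infty}e^{-y^2}dy\right]^{-1}$. Then $\theta$ satisfies the Burgers equation with convection: $\partial_t\theta+\lambda\partial_x\theta+\partial_x(\theta^2/2)=\frac{\nu}{2}\partial_x^2\theta$ for all $x\in\mathbb{R}$, $t>0$. -/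
/-!
Cole–Hopf: `θ = -ν ∂ₓ log φ`, where `φ = √π + k ∫_z^∞ e^{-y²} dy` (`k = e^{m/ν} - 1`) solves
`φ_t + λ φ_x = (ν/2) φ_xx` and depends only on `z = (x - λ(t+1)) / S(t)`, `S(t) = √(2ν(t+1))`. Concretely
`θ = ν / S(t) · h(z)` with the profile `h = k e^{-z²} / (√π + k ∫_z^∞ e^{-y²} dy)`, which solves the
Riccati equation `h' = h² - 2zh`. Since `S S' = ν`, the Burgers equation for `θ` reduces to the
derivative of this Riccati equation.
-/

open Real MeasureTheory

theorem hasDerivAt_integral_Ioi {E : Type*} [NormedAddCommGroup E] [NormedSpace ℝ E]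
    [CompleteSpace E] {f : ℝ → E} (hf : Continuous f) (hfi : Integrable f) (z : ℝ) :
    HasDerivAt (fun a => ∫ y in Set.Ioi a, f y) (-f z) z := by
  have htail : (fun a => ∫ y in Set.Ioi a, f y) =
      fun a => (∫ y in Set.Ioi 0, f y) - ∫ y in (0 : ℝ)..a, f y := by
    funext a
    rw [← intervalIntegral.integral_Ioi_sub_Ioi' hfi.integrableOn hfi.integrableOn, sub_sub_cancel]
  rw [htail]
  exact ((hf.integral_hasStrictDerivAt 0 z).hasDerivAt).const_sub _

noncomputable def gaussTailProfile (c k z : ℝ) : ℝ :=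
  k * exp (-z ^ 2) / (c + k * ∫ y in Set.Ioi z, exp (-y ^ 2))

theorem hasDerivAt_gaussTailProfile {c k z : ℝ}
    (hD : c + k * ∫ y in Set.Ioi z, exp (-y ^ 2) ≠ 0) :
    HasDerivAt (gaussTailProfile c k)
      (gaussTailProfile c k z ^ 2 - 2 * z * gaussTailProfile c k z) z := by
  have hgauss : HasDerivAt (fun y => exp (-y ^ 2)) (-(2 * z) * exp (-z ^ 2)) z := by
    simpa [mul_comm] using ((hasDerivAt_pow 2 z).neg).exp
  have htail := hasDerivAt_integral_Ioi (f := fun y => exp (-y ^ 2)) (by fun_prop)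
    (by simpa using integrable_exp_neg_mul_sq one_pos) z
  have h := (hgauss.const_mul k).div ((htail.const_mul k).const_add c) hD
  refine h.congr_deriv ?_
  unfold gaussTailProfile
  field_simp
  ring

noncomputable def selfSimilar (ν lam : ℝ) (S h : ℝ → ℝ) (x t : ℝ) : ℝ :=
  ν / S t * h ((x - lam * (t + 1)) / S t)

theorem hasDerivAt_riccati_rhs {h : ℝ → ℝ} (hh : ∀ z, HasDerivAt h (h z ^ 2 - 2 * z * h z) z)
    (z : ℝ) :
    HasDerivAt (fun z => h z ^ 2 - 2 * z * h z)
      (2 * h z * (h z ^ 2 - 2 * z * h z) - 2 * h z - 2 * z * (h z ^ 2 - 2 * z * h z)) z := by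
  refine ((hh z).pow 2).sub (((hasDerivAt_id z).const_mul 2).mul (hh z)) |>.congr_deriv ?_
  simp only [id]
  ring

theorem selfSimilar_burgers {ν lam t : ℝ} {S h : ℝ → ℝ}
    (hh : ∀ z, HasDerivAt h (h z ^ 2 - 2 * z * h z) z)
    (hSt : S t ≠ 0) (hS : HasDerivAt S (ν / S t) t) (x : ℝ) :
    deriv (fun s => selfSimilar ν lam S h x s) t
        + lam * deriv (fun y => selfSimilar ν lam S h y t) x
        + deriv (fun y => selfSimilar ν lam S h y t ^ 2 / 2) x
      = ν / 2 * deriv (deriv (fun y => selfSimilar ν lam S h y t)) x := by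
  set h' := fun z => h z ^ 2 - 2 * z * h z
  set Z := fun y => (y - lam * (t + 1)) / S t
  have hZ (y : ℝ) : HasDerivAt Z (1 / S t) y := by
    simpa using ((hasDerivAt_id y).sub_const (lam * (t + 1))).div_const (S t)
  have hux (y : ℝ) :
      HasDerivAt (fun y => selfSimilar ν lam S h y t) (ν / S t ^ 2 * h' (Z y)) y := by
    refine (((hh (Z y)).comp y (hZ y)).const_mul (ν / S t)).congr_deriv ?_
    simp only [h']
    field_simp
  have huxx : HasDerivAt (fun y => ν / S t ^ 2 * h' (Z y))
      (ν / S t ^ 3 * (2 * h (Z x) * h' (Z x) - 2 * h (Z x) - 2 * Z x * h' (Z x))) x := by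
    refine (((hasDerivAt_riccati_rhs hh (Z x)).comp x (hZ x)).const_mul (ν / S t ^ 2)).congr_deriv ?_
    simp only [h']
    field_simp
  have hut : HasDerivAt (fun s => selfSimilar ν lam S h x s)
      (-(ν ^ 2 / S t ^ 3) * (h (Z x) + Z x * h' (Z x)) - lam * ν / S t ^ 2 * h' (Z x)) t := by
    have hnum : HasDerivAt (fun s => x - lam * (s + 1)) (-lam) t := by
      simpa using (((hasDerivAt_id t).add_const 1).const_mul lam).const_sub x
    refine (((hasDerivAt_const t ν).fun_div hS hSt).mul
      ((hh (Z x)).comp t (hnum.fun_div hS hSt))).congr_deriv ?_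
    simp only [Function.comp_apply, Z, h']
    field_simp
    ring
  rw [hut.deriv, (hux x).deriv, (((hux x).fun_pow 2).div_const 2).deriv,
    show deriv (fun y => selfSimilar ν lam S h y t) = fun y => ν / S t ^ 2 * h' (Z y) from
      funext fun y => (hux y).deriv, huxx.deriv,
    show selfSimilar ν lam S h x t = ν / S t * h (Z x) from rfl]
  simp only [h', Nat.cast_ofNat, Nat.reduceSub, pow_one]
  field_simp
  ring

theorem hasDerivAt_sqrt_affine {ν t : ℝ} (h : 0 < 2 * ν * (t + 1)) :
    HasDerivAt (fun s => √(2 * ν * (s + 1))) (ν / √(2 * ν * (t + 1))) t := by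
  have hlin : HasDerivAt (fun s => 2 * ν * (s + 1)) (2 * ν) t := by
    simpa using ((hasDerivAt_id t).add_const 1).const_mul (2 * ν)
  refine ((Real.hasDerivAt_sqrt h.ne').comp t hlin).congr_deriv ?_
  field_simp

theorem selfSimilar_gaussTailProfile {ν t : ℝ} (hν : 0 < ν) (ht : -1 < t) (lam c k x : ℝ) :
    selfSimilar ν lam (fun s => √(2 * ν * (s + 1))) (gaussTailProfile c k) x t =
      √ν / √(2 * (t + 1)) * k * exp (-(x - lam * (t + 1)) ^ 2 / (2 * ν * (t + 1))) *
        (c + k * ∫ y in Set.Ioi ((x - lam * (t + 1)) / √(2 * ν * (t + 1))), exp (-y ^ 2))⁻¹ := by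
  have hτ : 0 < 2 * (t + 1) := by linarith
  have hsplit : √(2 * ν * (t + 1)) = √ν * √(2 * (t + 1)) := by
    rw [show 2 * ν * (t + 1) = ν * (2 * (t + 1)) by ring, Real.sqrt_mul hν.le]
  have hexp : (x - lam * (t + 1)) ^ 2 / (2 * ν * (t + 1)) =
      ((x - lam * (t + 1)) / √(2 * ν * (t + 1))) ^ 2 := by
    rw [div_pow, Real.sq_sqrt (by nlinarith)]
  have hsν : 0 < √ν := Real.sqrt_pos.mpr hν
  have hsτ : 0 < √(2 * (t + 1)) := Real.sqrt_pos.mpr hτ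
  rw [neg_div, hexp, selfSimilar, gaussTailProfile, hsplit]
  field_simp
  rw [Real.sq_sqrt hν.le]

theorem cole_hopf_solves_burgers (ν lam m : ℝ) (hν : 0 < ν)
    (θ : ℝ → ℝ → ℝ)
    (hθ : ∀ x t, θ x t =
      (Real.sqrt ν / Real.sqrt (2*(t+1))) * (Real.exp (m/ν) - 1) *
        Real.exp (-(x - lam*(t+1))^2 / (2*ν*(t+1))) *
        (Real.sqrt π + (Real.exp (m/ν) - 1) *
          ∫ y in Set.Ioi ((x - lam*(t+1)) / Real.sqrt (2*ν*(t+1))), Real.exp (-y^2))⁻¹)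
    (hden : ∀ x t, 0 < t →
      Real.sqrt π + (Real.exp (m/ν) - 1) *
        ∫ y in Set.Ioi ((x - lam*(t+1)) / Real.sqrt (2*ν*(t+1))), Real.exp (-y^2) ≠ 0) :
    ∀ x t, 0 < t →
      deriv (fun s => θ x s) t + lam * deriv (fun y => θ y t) x
        + deriv (fun y => (θ y t)^2 / 2) x
      = (ν/2) * deriv (deriv (fun y => θ y t)) x := by
  intro x t ht
  have hSt : 0 < √(2 * ν * (t + 1)) := Real.sqrt_pos.mpr (by positivity)
  have hD (z : ℝ) : √π + (exp (m / ν) - 1) * ∫ y in Set.Ioi z, exp (-y ^ 2) ≠ 0 := by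
    simpa [hSt.ne'] using hden (lam * (t + 1) + z * √(2 * ν * (t + 1))) t ht
  set S := fun s => √(2 * ν * (s + 1))
  set h := gaussTailProfile (√π) (exp (m / ν) - 1)
  have hθ_eq (y s : ℝ) (hs : -1 < s) : θ y s = selfSimilar ν lam S h y s := by
    rw [hθ, selfSimilar_gaussTailProfile hν hs]
  have hθ_t : (fun s => θ x s) =ᶠ[nhds t] fun s => selfSimilar ν lam S h x s :=
    Filter.eventually_of_mem (Ioi_mem_nhds (by linarith : (-1 : ℝ) < t))
      fun s hs => hθ_eq x s hs
  have hθ_x (y : ℝ) : θ y t = selfSimilar ν lam S h y t := hθ_eq y t (by linarith)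
  rw [hθ_t.deriv_eq]
  simp only [hθ_x]
  exact selfSimilar_burgers (S := S) (fun z => hasDerivAt_gaussTailProfile (hD z)) hSt.ne'
    (hasDerivAt_sqrt_affine (by positivity)) x
end

section
/- Let $\lambda\neq 0$ and $\mu>0$, and let $E(x,t;\lambda,\mu)=\int_{-\infty}^{0}e^{2z}e^{-\frac{(x-z-\lambda t)^2}{\mu t}}dz$. Then there exists a constant $C>0$ such that for all $x\in\mathbb{R}$ and $t>0$: $t^{-1/2}E(x,t;\lambda,\mu)\leq C(t+1)^{-1/2}e^{-\frac{(x-\lambda t)^2}{Ct}}+Ce^{-\frac{|x|+t}{C}}$. -/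
open Real MeasureTheory

private lemma E_integrable (a s : ℝ) (hs : 0 < s) :
    IntegrableOn (fun z => Real.exp (2*z) * Real.exp (-(a - z)^2/s)) (Set.Iio (0:ℝ)) := by
  have hexp : IntegrableOn (fun z => Real.exp z) (Set.Iio (0:ℝ)) :=
    (integrableOn_exp_Iic 0).mono_set Set.Iio_subset_Iic_self
  have hc : Continuous (fun z : ℝ => Real.exp (2*z) * Real.exp (-(a - z)^2/s)) := by fun_prop
  refine MeasureTheory.Integrable.mono hexp hc.aestronglyMeasurable ?_
  rw [ae_restrict_iff' measurableSet_Iio]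
  refine Filter.Eventually.of_forall fun z hz => ?_
  simp only [Set.mem_Iio] at hz
  have h0 : (0:ℝ) ≤ (a - z)^2/s := by positivity
  have h1 : Real.exp (2*z) * Real.exp (-(a - z)^2/s) ≤ Real.exp z := by
    rw [← Real.exp_add, Real.exp_le_exp, neg_div]
    linarith
  have h2 : (0:ℝ) < Real.exp (2*z) * Real.exp (-(a - z)^2/s) := by positivity
  rw [Real.norm_eq_abs, Real.norm_eq_abs, abs_of_pos h2, abs_of_pos (Real.exp_pos z)]
  exact h1

private lemma exp_pt (a s K G z N : ℝ) (hs : 0 < s)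
    (hN : (K + G) - (2*z + -(a - z)^2/s) = N/s) (hN0 : 0 ≤ N) :
    Real.exp (2*z) * Real.exp (-(a - z)^2/s) ≤ Real.exp K * Real.exp G := by
  rw [← Real.exp_add, ← Real.exp_add, Real.exp_le_exp, ← sub_nonneg, hN]
  exact div_nonneg hN0 hs.le

private lemma E_le_aux (a s K : ℝ) (hs : 0 < s) (g : ℝ → ℝ)
    (hg : IntegrableOn g (Set.Iio (0:ℝ)))
    (hpt : ∀ z : ℝ, z < 0 →
      Real.exp (2*z) * Real.exp (-(a - z)^2/s) ≤ Real.exp K * g z) :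
    (∫ z in Set.Iio (0:ℝ), Real.exp (2*z) * Real.exp (-(a - z)^2/s))
      ≤ Real.exp K * ∫ z in Set.Iio (0:ℝ), g z := by
  rw [← integral_const_mul]
  exact setIntegral_mono_on (E_integrable a s hs) (hg.const_mul _) measurableSet_Iio
    (fun z hz => hpt z hz)

private lemma int_exp_Iio : (∫ z in Set.Iio (0:ℝ), Real.exp z) = 1 := by
  rw [setIntegral_congr_set Iio_ae_eq_Iic, integral_exp_Iic_zero]

/-- Case A bound 1 : E ≤ exp(-a²/s) when 0 ≤ 2a+s. -/
private lemma E_le_A1 (a s : ℝ) (hs : 0 < s) (h : 0 ≤ 2*a + s) :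
    (∫ z in Set.Iio (0:ℝ), Real.exp (2*z) * Real.exp (-(a - z)^2/s))
      ≤ Real.exp (-a^2/s) := by
  have := E_le_aux a s (-a^2/s) hs (fun z => Real.exp z)
    ((integrableOn_exp_Iic 0).mono_set Set.Iio_subset_Iic_self)
    (fun z hz => exp_pt a s (-a^2/s) z z ((a - z)^2 - a^2 - z*s) hs
      (by field_simp; ring)
      (by nlinarith [mul_nonneg (by linarith : (0:ℝ) ≤ -z)
            (by linarith : (0:ℝ) ≤ 2*a + s - z)]))
  rwa [int_exp_Iio, mul_one] at this

/-- Case A bound 2 : E ≤ exp(-a²/s)·√(πs) when 0 ≤ 2a+s. -/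
private lemma E_le_A2 (a s : ℝ) (hs : 0 < s) (h : 0 ≤ 2*a + s) :
    (∫ z in Set.Iio (0:ℝ), Real.exp (2*z) * Real.exp (-(a - z)^2/s))
      ≤ Real.exp (-a^2/s) * Real.sqrt (Real.pi * s) := by
  have hgint : Integrable (fun z : ℝ => Real.exp (-(z^2/s))) := by
    have h2 := integrable_exp_neg_mul_sq (show (0:ℝ) < 1/s by positivity)
    have : (fun z : ℝ => Real.exp (-(z^2/s))) = fun z : ℝ => Real.exp (-(1/s) * z^2) := by
      funext z; congr 1; ring
    rw [this]; exact h2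
  have hstep := E_le_aux a s (-a^2/s) hs (fun z => Real.exp (-(z^2/s)))
    hgint.integrableOn
    (fun z hz => exp_pt a s (-a^2/s) (-(z^2/s)) z ((a - z)^2 - a^2 - z^2 - 2*z*s) hs
      (by field_simp; ring)
      (by nlinarith [mul_nonneg (by linarith : (0:ℝ) ≤ -z)
            (by linarith : (0:ℝ) ≤ a + s)]))
  have hval : (∫ z : ℝ, Real.exp (-(z^2/s))) = Real.sqrt (Real.pi * s) := by
    have : (fun z : ℝ => Real.exp (-(z^2/s))) = fun z : ℝ => Real.exp (-(1/s) * z^2) := by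
      funext z; congr 1; ring
    rw [this, integral_gaussian]
    congr 1
    field_simp
  have hle2 : (∫ z in Set.Iio (0:ℝ), Real.exp (-(z^2/s)))
      ≤ ∫ z : ℝ, Real.exp (-(z^2/s)) :=
    setIntegral_le_integral hgint (Filter.Eventually.of_forall fun z => (Real.exp_pos _).le)
  calc (∫ z in Set.Iio (0:ℝ), Real.exp (2*z) * Real.exp (-(a - z)^2/s))
      ≤ Real.exp (-a^2/s) * ∫ z in Set.Iio (0:ℝ), Real.exp (-(z^2/s)) := hstep
    _ ≤ Real.exp (-a^2/s) * ∫ z : ℝ, Real.exp (-(z^2/s)) := by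
        exact mul_le_mul_of_nonneg_left hle2 (Real.exp_pos _).le
    _ = Real.exp (-a^2/s) * Real.sqrt (Real.pi * s) := by rw [hval]

/-- Case B bound 1 : E ≤ exp(a/2) when 2a+s ≤ 0. -/
private lemma E_le_B1 (a s : ℝ) (hs : 0 < s) (h : 2*a + s ≤ 0) :
    (∫ z in Set.Iio (0:ℝ), Real.exp (2*z) * Real.exp (-(a - z)^2/s))
      ≤ Real.exp (a/2) := by
  have := E_le_aux a s (a/2) hs (fun z => Real.exp z)
    ((integrableOn_exp_Iic 0).mono_set Set.Iio_subset_Iic_self)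
    (fun z hz => exp_pt a s (a/2) z z ((a - z)^2 + a*s/2 - z*s) hs
      (by field_simp; ring)
      (by nlinarith [sq_nonneg (z - a - s/2),
            mul_nonneg hs.le (by linarith : (0:ℝ) ≤ -(2*a + s))]))
  rwa [int_exp_Iio, mul_one] at this

/-- Case B bound 2 : E ≤ exp(a/4)·√(2πs) when 2a+s ≤ 0. -/
private lemma E_le_B2 (a s : ℝ) (hs : 0 < s) (h : 2*a + s ≤ 0) :
    (∫ z in Set.Iio (0:ℝ), Real.exp (2*z) * Real.exp (-(a - z)^2/s))
      ≤ Real.exp (a/4) * Real.sqrt (2 * Real.pi * s) := by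
  have hfun : (fun z : ℝ => Real.exp (-((z - a)^2/(2*s))))
      = fun z : ℝ => (fun u : ℝ => Real.exp (-(1/(2*s)) * u^2)) (z - a) := by
    funext z; congr 1; field_simp
  have hgint : Integrable (fun z : ℝ => Real.exp (-((z - a)^2/(2*s)))) := by
    rw [hfun]
    exact (integrable_exp_neg_mul_sq (show (0:ℝ) < 1/(2*s) by positivity)).comp_sub_right a
  have hstep := E_le_aux a s (a/4) hs (fun z => Real.exp (-((z - a)^2/(2*s))))
    hgint.integrableOn
    (fun z hz => exp_pt a s (a/4) (-((z - a)^2/(2*s))) z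
      (((z - a)^2 + a*s/2 - 4*z*s)/2) hs
      (by field_simp; ring)
      (by nlinarith [sq_nonneg (a + s/2 - z),
            mul_nonneg hs.le (by linarith : (0:ℝ) ≤ -(2*a + s)),
            mul_nonneg hs.le (by linarith : (0:ℝ) ≤ -z)]))
  have hval : (∫ z : ℝ, Real.exp (-((z - a)^2/(2*s)))) = Real.sqrt (2 * Real.pi * s) := by
    rw [hfun, integral_sub_right_eq_self (fun u : ℝ => Real.exp (-(1/(2*s)) * u^2)) a,
      integral_gaussian]
    congr 1
    field_simp
  have hle2 : (∫ z in Set.Iio (0:ℝ), Real.exp (-((z - a)^2/(2*s))))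
      ≤ ∫ z : ℝ, Real.exp (-((z - a)^2/(2*s))) :=
    setIntegral_le_integral hgint (Filter.Eventually.of_forall fun z => (Real.exp_pos _).le)
  calc (∫ z in Set.Iio (0:ℝ), Real.exp (2*z) * Real.exp (-(a - z)^2/s))
      ≤ Real.exp (a/4) * ∫ z in Set.Iio (0:ℝ), Real.exp (-((z - a)^2/(2*s))) := hstep
    _ ≤ Real.exp (a/4) * ∫ z : ℝ, Real.exp (-((z - a)^2/(2*s))) :=
        mul_le_mul_of_nonneg_left hle2 (Real.exp_pos _).le
    _ = Real.exp (a/4) * Real.sqrt (2 * Real.pi * s) := by rw [hval]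

theorem bound_of_E (lam μ : ℝ) (hlam : lam ≠ 0) (hμ : 0 < μ) :
    ∃ C > 0, ∀ (x t : ℝ), 0 < t →
      (Real.sqrt t)⁻¹ * (∫ z in Set.Iio (0:ℝ), Real.exp (2*z) * Real.exp (-(x - z - lam*t)^2/(μ*t)))
        ≤ C * (Real.sqrt (t+1))⁻¹ * Real.exp (-(x - lam*t)^2/(C*t))
          + C * Real.exp (-(|x| + t)/C) := by
  have hπ := Real.pi_pos
  refine ⟨2 * Real.sqrt (2*Real.pi*μ) + μ + 8*(|lam|+1)/μ + 8, by positivity,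
    fun x t ht => ?_⟩
  set C := 2 * Real.sqrt (2*Real.pi*μ) + μ + 8*(|lam|+1)/μ + 8 with hC
  have hsqnn : 0 ≤ Real.sqrt (2*Real.pi*μ) := Real.sqrt_nonneg _
  have hdiv : (0:ℝ) ≤ 8*(|lam|+1)/μ := by positivity
  have hCpos : 0 < C := by rw [hC]; positivity
  have hCμ : μ ≤ C := by rw [hC]; linarith
  have hC1 : (1:ℝ) ≤ C := by rw [hC]; linarith
  have hsqrt2 : Real.sqrt 2 ≤ 2 := by
    nlinarith [Real.sq_sqrt (by norm_num : (0:ℝ) ≤ 2), Real.sqrt_nonneg 2]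
  have hC2 : Real.sqrt 2 ≤ C := by rw [hC]; linarith
  have hC2πμ : Real.sqrt (2*Real.pi*μ) ≤ C := by rw [hC]; linarith
  have hCB : 4 + 8*(|lam|+1)/μ ≤ C := by rw [hC]; linarith
  have hspos : 0 < μ * t := mul_pos hμ ht
  have hT : 0 < Real.sqrt t := Real.sqrt_pos.2 ht
  have hT1 : 0 < Real.sqrt (t+1) := Real.sqrt_pos.2 (by linarith)
  -- rewrite the integral
  have hEeq : (∫ z in Set.Iio (0:ℝ),
        Real.exp (2*z) * Real.exp (-(x - z - lam*t)^2/(μ*t)))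
      = ∫ z in Set.Iio (0:ℝ), Real.exp (2*z) * Real.exp (-(x - lam*t - z)^2/(μ*t)) := by
    congr 1; funext z; rw [sub_right_comm]
  obtain ⟨a, ha⟩ : ∃ a : ℝ, a = x - lam*t := ⟨_, rfl⟩
  rw [hEeq]
  simp only [← ha]
  set E := ∫ z in Set.Iio (0:ℝ), Real.exp (2*z) * Real.exp (-(a - z)^2/(μ*t)) with hE
  clear_value C E
  have hexpCt : Real.exp (-a^2/(μ*t)) ≤ Real.exp (-a^2/(C*t)) := by
    rw [Real.exp_le_exp, neg_div, neg_div, neg_le_neg_iff]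
    exact div_le_div_of_nonneg_left (sq_nonneg a) hspos
      (mul_le_mul_of_nonneg_right hCμ ht.le)
  by_cases hcase : 0 ≤ 2*a + μ*t
  · -- Case A : near/right of the front, first term dominates
    have hfinal : (Real.sqrt t)⁻¹ * E
        ≤ C * (Real.sqrt (t+1))⁻¹ * Real.exp (-a^2/(C*t)) := by
      by_cases htt : t ≤ 1
      · -- small time : use the gaussian-mass bound
        have hEb := E_le_A2 a (μ*t) hspos hcase
        rw [← hE] at hEb
        have hsplit : Real.sqrt (Real.pi * (μ*t))
            = Real.sqrt (Real.pi * μ) * Real.sqrt t := by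
          rw [show Real.pi * (μ*t) = (Real.pi * μ) * t by ring,
            Real.sqrt_mul (by positivity)]
        have h1 : (Real.sqrt t)⁻¹ * E
            ≤ Real.sqrt (Real.pi * μ) * Real.exp (-a^2/(μ*t)) := by
          calc (Real.sqrt t)⁻¹ * E
              ≤ (Real.sqrt t)⁻¹ * (Real.exp (-a^2/(μ*t)) * Real.sqrt (Real.pi * (μ*t))) :=
                mul_le_mul_of_nonneg_left hEb (by positivity)
            _ = Real.sqrt (Real.pi * μ) * Real.exp (-a^2/(μ*t)) := by
                rw [hsplit]; field_simp
        have h2 : Real.sqrt (Real.pi * μ) ≤ C * (Real.sqrt (t+1))⁻¹ := by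
          rw [← div_eq_mul_inv, le_div_iff₀ hT1]
          calc Real.sqrt (Real.pi * μ) * Real.sqrt (t+1)
              ≤ Real.sqrt (Real.pi * μ) * Real.sqrt 2 :=
                mul_le_mul_of_nonneg_left
                  (Real.sqrt_le_sqrt (by linarith)) (Real.sqrt_nonneg _)
            _ = Real.sqrt (2*Real.pi*μ) := by
                rw [← Real.sqrt_mul (by positivity)]; congr 1; ring
            _ ≤ C := hC2πμ
        calc (Real.sqrt t)⁻¹ * E
            ≤ Real.sqrt (Real.pi * μ) * Real.exp (-a^2/(μ*t)) := h1
          _ ≤ Real.sqrt (Real.pi * μ) * Real.exp (-a^2/(C*t)) :=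
              mul_le_mul_of_nonneg_left hexpCt (Real.sqrt_nonneg _)
          _ ≤ C * (Real.sqrt (t+1))⁻¹ * Real.exp (-a^2/(C*t)) :=
              mul_le_mul_of_nonneg_right h2 (Real.exp_pos _).le
      · -- large time
        push_neg at htt
        have hEb := E_le_A1 a (μ*t) hspos hcase
        rw [← hE] at hEb
        have h2 : (Real.sqrt t)⁻¹ ≤ Real.sqrt 2 * (Real.sqrt (t+1))⁻¹ := by
          rw [← div_eq_mul_inv, le_div_iff₀ hT1, inv_mul_eq_div, div_le_iff₀ hT,
            ← Real.sqrt_mul (by norm_num : (0:ℝ) ≤ 2)]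
          exact Real.sqrt_le_sqrt (by linarith)
        calc (Real.sqrt t)⁻¹ * E
            ≤ (Real.sqrt t)⁻¹ * Real.exp (-a^2/(μ*t)) :=
              mul_le_mul_of_nonneg_left hEb (by positivity)
          _ ≤ (Real.sqrt t)⁻¹ * Real.exp (-a^2/(C*t)) :=
              mul_le_mul_of_nonneg_left hexpCt (by positivity)
          _ ≤ (Real.sqrt 2 * (Real.sqrt (t+1))⁻¹) * Real.exp (-a^2/(C*t)) :=
              mul_le_mul_of_nonneg_right h2 (Real.exp_pos _).le
          _ ≤ C * (Real.sqrt (t+1))⁻¹ * Real.exp (-a^2/(C*t)) := by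
              have : Real.sqrt 2 * (Real.sqrt (t+1))⁻¹ ≤ C * (Real.sqrt (t+1))⁻¹ :=
                mul_le_mul_of_nonneg_right hC2 (by positivity)
              exact mul_le_mul_of_nonneg_right this (Real.exp_pos _).le
    calc (Real.sqrt t)⁻¹ * E ≤ C * (Real.sqrt (t+1))⁻¹ * Real.exp (-a^2/(C*t)) := hfinal
      _ ≤ C * (Real.sqrt (t+1))⁻¹ * Real.exp (-a^2/(C*t)) + C * Real.exp (-(|x| + t)/C) := by
          have : 0 < C * Real.exp (-(|x| + t)/C) := by positivity
          linarith
  · -- Case B : far left of the front, exponentially small term dominates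
    push_neg at hcase
    have hcase' : 2*a + μ*t ≤ 0 := hcase.le
    have haneg : a < 0 := by nlinarith
    have habs : |x| ≤ -a + |lam| * t := by
      have hx : x = a + lam*t := by rw [ha]; ring
      calc |x| = |a + lam*t| := by rw [hx]
        _ ≤ |a| + |lam * t| := abs_add_le _ _
        _ = -a + |lam| * t := by
            rw [abs_of_neg haneg, abs_mul, abs_of_pos ht]
    have hkey : a * C ≤ -(|x| + t) * 4 := by
      have h1 : a * C ≤ a * (4 + 8*(|lam|+1)/μ) :=
        mul_le_mul_of_nonpos_left hCB haneg.le
      have h2 : 8*(|lam|+1)*t ≤ (8*(|lam|+1)/μ) * (2*(-a)) := by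
        calc 8*(|lam|+1)*t = (8*(|lam|+1)/μ) * (μ*t) := by field_simp
          _ ≤ (8*(|lam|+1)/μ) * (2*(-a)) :=
              mul_le_mul_of_nonneg_left (by linarith) hdiv
      nlinarith [abs_nonneg lam, abs_nonneg x]
    have hexpB : Real.exp (a/4) ≤ Real.exp (-(|x| + t)/C) := by
      rw [Real.exp_le_exp, div_le_div_iff₀ (by norm_num) hCpos]
      exact hkey
    have hfinal : (Real.sqrt t)⁻¹ * E ≤ C * Real.exp (-(|x| + t)/C) := by
      by_cases htt : t ≤ 1
      · have hEb := E_le_B2 a (μ*t) hspos hcase'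
        rw [← hE] at hEb
        have hsplit : Real.sqrt (2 * Real.pi * (μ*t))
            = Real.sqrt (2*Real.pi*μ) * Real.sqrt t := by
          rw [show 2 * Real.pi * (μ*t) = (2*Real.pi*μ) * t by ring,
            Real.sqrt_mul (by positivity)]
        have h1 : (Real.sqrt t)⁻¹ * E
            ≤ Real.sqrt (2*Real.pi*μ) * Real.exp (a/4) := by
          calc (Real.sqrt t)⁻¹ * E
              ≤ (Real.sqrt t)⁻¹ * (Real.exp (a/4) * Real.sqrt (2 * Real.pi * (μ*t))) :=
                mul_le_mul_of_nonneg_left hEb (by positivity)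
            _ = Real.sqrt (2*Real.pi*μ) * Real.exp (a/4) := by
                rw [hsplit]; field_simp
        calc (Real.sqrt t)⁻¹ * E ≤ Real.sqrt (2*Real.pi*μ) * Real.exp (a/4) := h1
          _ ≤ C * Real.exp (-(|x| + t)/C) :=
              mul_le_mul hC2πμ hexpB (Real.exp_pos _).le hCpos.le
      · push_neg at htt
        have hEb := E_le_B1 a (μ*t) hspos hcase'
        rw [← hE] at hEb
        have hTinv : (Real.sqrt t)⁻¹ ≤ 1 := by
          rw [inv_le_one_iff₀]
          right
          calc (1:ℝ) = Real.sqrt 1 := by rw [Real.sqrt_one]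
            _ ≤ Real.sqrt t := Real.sqrt_le_sqrt (by linarith)
        have hhalf : Real.exp (a/2) ≤ Real.exp (a/4) :=
          Real.exp_le_exp.2 (by linarith)
        calc (Real.sqrt t)⁻¹ * E
            ≤ (Real.sqrt t)⁻¹ * Real.exp (a/2) :=
              mul_le_mul_of_nonneg_left hEb (by positivity)
          _ ≤ 1 * Real.exp (a/2) :=
              mul_le_mul_of_nonneg_right hTinv (Real.exp_pos _).le
          _ = Real.exp (a/2) := one_mul _
          _ ≤ Real.exp (a/4) := hhalf
          _ ≤ Real.exp (-(|x| + t)/C) := hexpB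
          _ ≤ C * Real.exp (-(|x| + t)/C) := by
              nlinarith [Real.exp_pos (-(|x| + t)/C)]
    calc (Real.sqrt t)⁻¹ * E ≤ C * Real.exp (-(|x| + t)/C) := hfinal
      _ ≤ C * (Real.sqrt (t+1))⁻¹ * Real.exp (-a^2/(C*t)) + C * Real.exp (-(|x| + t)/C) := by
          have : 0 < C * (Real.sqrt (t+1))⁻¹ * Real.exp (-a^2/(C*t)) := by positivity
          linarith
end

section
/- Let $\lambda\in\mathbb{R}$, $\mu>0$. Then there exists $C>0$ such that for all $x\in\mathbb{R}$ and $t\geq 0$: $\left|\int_{0}^{t}e^{-\frac{t-s}{\mu}}(s+1)^{-1/4}\,[(x-\lambda(s+1))^2+(s+1)]^{-3/4}\,ds\right|\leq C(t+1)^{-1/4}[(x-\lambda(t+1))^2+(t+1)]^{-3/4}$. -/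
open Real MeasureTheory intervalIntegral

/-! Going backwards in time the weight `(s+1)^{-1/4} ψ_{3/2}(x,s;λ)` grows at most polynomially:
both `s + 1` and `(x - λ(s+1))² + (s+1)` at time `t` exceed their values at `s ≤ t` by factors
polynomial in `t - s`, and raising to powers in `[-1, 0]` keeps the factors. The exponential kernel
absorbs a polynomial factor at the cost of halving its rate, and `∫₀ᵗ e^{-(t-s)/(2μ)} ds ≤ 2μ`. -/

theorem rpow_le_mul_rpow_of_le_mul {a b k q : ℝ} (hb : 0 < b) (hk : 1 ≤ k) (hq : q ≤ 0)
    (hq' : -1 ≤ q) (h : b ≤ k * a) : a ^ q ≤ k * b ^ q := by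
  have hk0 : 0 < k := by linarith
  have ha : 0 < a := pos_of_mul_pos_right (hb.trans_le h) hk0.le
  calc a ^ q = k ^ (-q) * (k * a) ^ q := by
        rw [mul_rpow hk0.le ha.le, rpow_neg hk0.le, inv_mul_cancel_left₀ (rpow_pos_of_pos hk0 q).ne']
    _ ≤ k * b ^ q :=
        mul_le_mul (rpow_le_self_of_one_le hk (by linarith)) (rpow_le_rpow_of_nonpos hb h hq)
          (rpow_nonneg (by positivity) q) hk0.le

theorem one_add_le_inv_mul_exp {ε : ℝ} (τ : ℝ) (hε : 0 < ε) (hε' : ε ≤ 1) :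
    1 + τ ≤ ε⁻¹ * exp (ε * τ) := by
  rw [le_inv_mul_iff₀ hε]
  nlinarith [add_one_le_exp (ε * τ)]

theorem one_add_pow_mul_exp_neg_div_le {μ τ : ℝ} (n : ℕ) (hμ : 0 < μ) (hτ : 0 ≤ τ) :
    (1 + τ) ^ n * exp (-τ / μ) ≤ (1 + 2 * μ * n) ^ n * exp (-τ / (2 * μ)) := by
  set ε := (1 + 2 * μ * n)⁻¹
  have hc : 0 < 1 + 2 * μ * n := by positivity
  have hε : 0 < ε := inv_pos.2 hc
  have hε' : ε ≤ 1 := inv_le_one_of_one_le₀ (by nlinarith [(Nat.cast_nonneg n : (0:ℝ) ≤ n)])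
  have hrate : n * ε * τ ≤ τ / (2 * μ) := by
    rw [div_eq_mul_inv, mul_comm τ]
    gcongr
    rw [mul_inv_le_iff₀ hc, inv_mul_eq_div, le_div_iff₀ (by positivity)]
    linarith
  calc (1 + τ) ^ n * exp (-τ / μ) ≤ (ε⁻¹ * exp (ε * τ)) ^ n * exp (-τ / μ) := by
        gcongr
        exact one_add_le_inv_mul_exp τ hε hε'
    _ = (1 + 2 * μ * n) ^ n * exp (n * ε * τ - τ / μ) := by
        rw [mul_pow, ← exp_nat_mul, inv_inv, mul_assoc, ← exp_add]
        ring_nf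
    _ ≤ (1 + 2 * μ * n) ^ n * exp (-τ / (2 * μ)) := by
        gcongr
        have : τ / (2 * μ) - τ / μ = -τ / (2 * μ) := by field_simp; ring
        linarith

/-- The weight `(s+1)^{-1/4} ψ_{3/2}(x,s;λ)` of the paper. -/
noncomputable def psiWeight (lam x s : ℝ) : ℝ :=
  (s + 1) ^ (-(1:ℝ)/4) * ((x - lam * (s + 1)) ^ 2 + (s + 1)) ^ (-(3:ℝ)/4)

theorem psiWeight_nonneg (lam x : ℝ) {s : ℝ} (hs : 0 ≤ s) : 0 ≤ psiWeight lam x s := by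
  unfold psiWeight; positivity

theorem sq_add_le_mul_sq_add {lam x s t : ℝ} (hs : 0 ≤ s) (hst : s ≤ t) :
    (x - lam * (t + 1)) ^ 2 + (t + 1)
      ≤ (3 + 2 * lam ^ 2) * (1 + (t - s)) ^ 2 * ((x - lam * (s + 1)) ^ 2 + (s + 1)) := by
  have hτ : 0 ≤ t - s := by linarith
  nlinarith [sq_nonneg (x - lam * (s + 1) + lam * (t - s)), mul_nonneg hτ hs,
    mul_nonneg hτ (sq_nonneg (x - lam * (s + 1))), mul_nonneg (sq_nonneg lam) (sq_nonneg (t - s)),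
    mul_nonneg (mul_nonneg (sq_nonneg lam) (sq_nonneg (t - s))) hs,
    mul_nonneg (sq_nonneg (t - s)) (sq_nonneg (x - lam * (s + 1))),
    mul_nonneg (sq_nonneg lam) hτ, mul_nonneg (mul_nonneg (sq_nonneg lam) hτ) hs]

theorem psiWeight_le {lam x s t : ℝ} (hs : 0 ≤ s) (hst : s ≤ t) :
    psiWeight lam x s ≤ (3 + 2 * lam ^ 2) * (1 + (t - s)) ^ 3 * psiWeight lam x t := by
  have hL : 1 ≤ 3 + 2 * lam ^ 2 := by nlinarith [sq_nonneg lam]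
  have htime := rpow_le_mul_rpow_of_le_mul (a := s + 1) (b := t + 1) (k := 1 + (t - s))
    (q := -(1:ℝ)/4) (by linarith) (by linarith) (by norm_num) (by norm_num) (by nlinarith)
  have hNs : 0 ≤ (x - lam * (s + 1)) ^ 2 + (s + 1) := by positivity
  have hNt : 0 < (x - lam * (t + 1)) ^ 2 + (t + 1) := by nlinarith [sq_nonneg (x - lam * (t + 1))]
  have hspace := rpow_le_mul_rpow_of_le_mul (q := -(3:ℝ)/4) hNt
    (one_le_mul_of_one_le_of_one_le hL (one_le_pow₀ (by linarith))) (by norm_num) (by norm_num)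
    (sq_add_le_mul_sq_add (lam := lam) (x := x) hs hst)
  calc psiWeight lam x s
      ≤ ((1 + (t - s)) * (t + 1) ^ (-(1:ℝ)/4)) *
        ((3 + 2 * lam ^ 2) * (1 + (t - s)) ^ 2 * ((x - lam * (t + 1)) ^ 2 + (t + 1)) ^ (-(3:ℝ)/4)) :=
        mul_le_mul htime hspace (rpow_nonneg hNs _)
          (mul_nonneg (by linarith) (rpow_nonneg (by linarith) _))
    _ = (3 + 2 * lam ^ 2) * (1 + (t - s)) ^ 3 * psiWeight lam x t := by
        unfold psiWeight; ring

theorem integral_exp_neg_sub_div_le {a t : ℝ} (ha : 0 < a) :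
    ∫ s in (0:ℝ)..t, exp (-(t - s) / a) ≤ a := by
  have hrw : ∀ s, -(t - s) / a = s / a - t / a := fun s => by ring
  simp_rw [hrw]
  rw [integral_comp_div_sub exp ha.ne', integral_exp, smul_eq_mul, sub_self, exp_zero]
  nlinarith [exp_pos (0 / a - t / a)]

theorem abs_integral_le_of_abs_le_mul_exp {f : ℝ → ℝ} {A a t : ℝ} (hA : 0 ≤ A) (ha : 0 < a)
    (ht : 0 ≤ t) (hf : ∀ s ∈ Set.Ioc 0 t, |f s| ≤ A * exp (-(t - s) / a)) :
    |∫ s in (0:ℝ)..t, f s| ≤ A * a := by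
  calc |∫ s in (0:ℝ)..t, f s| ≤ ∫ s in (0:ℝ)..t, A * exp (-(t - s) / a) :=
        norm_integral_le_of_norm_le ht
          (.of_forall fun s hs => (norm_eq_abs (f s)).trans_le (hf s hs))
          ((by fun_prop : Continuous fun s => A * exp (-(t - s) / a)).intervalIntegrable _ _)
    _ ≤ A * a := by
        rw [intervalIntegral.integral_const_mul]
        exact mul_le_mul_of_nonneg_left (integral_exp_neg_sub_div_le ha) hA

theorem exp_mul_psiWeight_le {lam μ x s t : ℝ} (hμ : 0 < μ) (hs : 0 ≤ s) (hst : s ≤ t) :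
    exp (-(t - s) / μ) * psiWeight lam x s
      ≤ (3 + 2 * lam ^ 2) * (1 + 2 * μ * 3) ^ 3 * psiWeight lam x t * exp (-(t - s) / (2 * μ)) := by
  calc exp (-(t - s) / μ) * psiWeight lam x s
      ≤ exp (-(t - s) / μ) * ((3 + 2 * lam ^ 2) * (1 + (t - s)) ^ 3 * psiWeight lam x t) :=
        mul_le_mul_of_nonneg_left (psiWeight_le hs hst) (exp_pos _).le
    _ = (3 + 2 * lam ^ 2) * psiWeight lam x t * ((1 + (t - s)) ^ 3 * exp (-(t - s) / μ)) := by
        ring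
    _ ≤ (3 + 2 * lam ^ 2) * psiWeight lam x t *
        ((1 + 2 * μ * 3) ^ 3 * exp (-(t - s) / (2 * μ))) := by
        refine mul_le_mul_of_nonneg_left ?_
          (mul_nonneg (by positivity) (psiWeight_nonneg lam x (hs.trans hst)))
        exact_mod_cast one_add_pow_mul_exp_neg_div_le 3 hμ (by linarith : 0 ≤ t - s)
    _ = (3 + 2 * lam ^ 2) * (1 + 2 * μ * 3) ^ 3 * psiWeight lam x t *
        exp (-(t - s) / (2 * μ)) := by
        ring

theorem time_convolution_psi_bound (lam μ : ℝ) (hμ : 0 < μ) :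
    ∃ C > 0, ∀ (x t : ℝ), 0 ≤ t →
      |∫ s in (0:ℝ)..t, Real.exp (-(t-s)/μ) * (s+1) ^ (-(1:ℝ)/4) *
          ((x - lam*(s+1))^2 + (s+1)) ^ (-(3:ℝ)/4)|
        ≤ C * (t+1) ^ (-(1:ℝ)/4) * ((x - lam*(t+1))^2 + (t+1)) ^ (-(3:ℝ)/4) := by
  set K := (3 + 2 * lam ^ 2) * (1 + 2 * μ * 3) ^ 3
  refine ⟨K * (2 * μ), by positivity, fun x t ht => ?_⟩
  have hconv := abs_integral_le_of_abs_le_mul_exp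
    (f := fun s => exp (-(t - s) / μ) * psiWeight lam x s) (A := K * psiWeight lam x t) (a := 2 * μ)
    (mul_nonneg (by positivity) (psiWeight_nonneg lam x ht)) (by positivity) ht
    fun s ⟨hs, hst⟩ => by
      rw [abs_of_nonneg (mul_nonneg (exp_pos _).le (psiWeight_nonneg lam x hs.le))]
      exact exp_mul_psiWeight_le hμ hs.le hst
  simp only [psiWeight, ← mul_assoc] at hconv
  linarith
end

section
/- Let $\mu>0$, $\lambda\neq 0$, and let $I(x,t)=\int_{t^{1/2}}^{t}(t-s)^{-1/2}e^{-\frac{(x-\lambda(t-s))^2}{\mu(t-s)}}e^{-s/C_0}\,ds$ for constants $C_0>0$, $t\geq 1$. Then there exists $C>0$ (depending on $\lambda,\mu,C_0$) such that $I(x,t)\leq C\,e^{-\sqrt{t}/C}\left(e^{-\frac{(x-\lambda t)^2}{Ct}}+e^{-\frac{|x-\lambda t|}{C}}\right)t^{1/2}$ for all $x\in\mathbb{R}$; in particular $I(x,t)\leq C[(x-\lambda(t+1))^2+(t+1)]^{-3/4}$. -/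
open Real MeasureTheory intervalIntegral

lemma mul_exp_neg_le_one {u : ℝ} (hu : 0 ≤ u) : u * Real.exp (-u) ≤ 1 := by
  rw [Real.exp_neg]
  have h1 : u ≤ Real.exp u := by linarith [Real.add_one_le_exp u]
  have h2 : (0:ℝ) < Real.exp u := Real.exp_pos u
  calc u * (Real.exp u)⁻¹ ≤ Real.exp u * (Real.exp u)⁻¹ := by
        exact mul_le_mul_of_nonneg_right h1 (by positivity)
    _ = 1 := mul_inv_cancel₀ h2.ne'
  
lemma sq_mul_exp_neg_le {u : ℝ} (hu : 0 ≤ u) : u^2 * Real.exp (-u) ≤ 4 := by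
  rw [Real.exp_neg]
  have h1 : u^2 ≤ 4 * Real.exp u := by
    have h := Real.add_one_le_exp (u/2)
    have he : Real.exp u = (Real.exp (u/2))^2 := by
      rw [← Real.exp_nat_mul]; norm_num; ring
    have hx : (u/2)^2 ≤ (Real.exp (u/2))^2 :=
      pow_le_pow_left₀ (by positivity) (by linarith) 2
    nlinarith [Real.exp_pos (u/2)]
  have h2 : (0:ℝ) < Real.exp u := Real.exp_pos u
  calc u^2 * (Real.exp u)⁻¹ ≤ (4 * Real.exp u) * (Real.exp u)⁻¹ := by
        exact mul_le_mul_of_nonneg_right h1 (by positivity)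
    _ = 4 := by field_simp
  
lemma cube_mul_exp_neg_le {u : ℝ} (hu : 0 ≤ u) : u^3 * Real.exp (-u) ≤ 27 := by
  rw [Real.exp_neg]
  have h1 : u^3 ≤ 27 * Real.exp u := by
    have h := Real.add_one_le_exp (u/3)
    have he : Real.exp u = (Real.exp (u/3))^3 := by
      rw [← Real.exp_nat_mul]; norm_num; ring
    have hx : (u/3)^3 ≤ (Real.exp (u/3))^3 :=
      pow_le_pow_left₀ (by positivity) (by linarith) 3
    nlinarith [Real.exp_pos (u/3)]
  have h2 : (0:ℝ) < Real.exp u := Real.exp_pos u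
  calc u^3 * (Real.exp u)⁻¹ ≤ (27 * Real.exp u) * (Real.exp u)⁻¹ := by
        exact mul_le_mul_of_nonneg_right h1 (by positivity)
    _ = 27 := by field_simp

lemma sqrt_inv_eq_rpow (u : ℝ) : (Real.sqrt u)⁻¹ = u ^ (-(2⁻¹) : ℝ) := by
  rcases lt_trichotomy u 0 with h | h | h
  · rw [Real.sqrt_eq_zero'.mpr h.le, inv_zero, Real.rpow_def_of_neg h]
    rw [show (-(2⁻¹):ℝ) * π = -(π/2) by ring, Real.cos_neg, Real.cos_pi_div_two, mul_zero]
  · subst h; rw [Real.sqrt_zero, inv_zero, Real.zero_rpow (by norm_num)]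
  · rw [Real.sqrt_eq_rpow, ← Real.rpow_neg h.le]
    norm_num

set_option maxHeartbeats 2000000 in
theorem boundary_term_estimate (lam μ C₀ : ℝ) (hlam : lam ≠ 0) (hμ : 0 < μ) (hC₀ : 0 < C₀) :
    ∃ C > 0, ∀ (t : ℝ), 1 ≤ t → ∀ x : ℝ,
      (∫ s in Real.sqrt t..t, (Real.sqrt (t-s))⁻¹ *
          Real.exp (-(x - lam*(t-s))^2/(μ*(t-s))) * Real.exp (-s/C₀))
        ≤ C * Real.exp (-Real.sqrt t/C) *
            (Real.exp (-(x - lam*t)^2/(C*t)) + Real.exp (-|x - lam*t|/C)) * Real.sqrt t ∧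
      (∫ s in Real.sqrt t..t, (Real.sqrt (t-s))⁻¹ *
          Real.exp (-(x - lam*(t-s))^2/(μ*(t-s))) * Real.exp (-s/C₀))
        ≤ C * ((x - lam*(t+1))^2 + (t+1)) ^ (-(3:ℝ)/4) := by
  have hD2 : (2:ℝ) ≤ max (max 2 (2*C₀)) (max (4*μ) (4 * |lam| * C₀)) :=
    le_max_of_le_left (le_max_left _ _)
  have hDC₀ : 2*C₀ ≤ max (max 2 (2*C₀)) (max (4*μ) (4 * |lam| * C₀)) :=
    le_max_of_le_left (le_max_right _ _)
  have hDμ : 4*μ ≤ max (max 2 (2*C₀)) (max (4*μ) (4 * |lam| * C₀)) :=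
    le_max_of_le_right (le_max_left _ _)
  have hDlam : 4 * |lam| * C₀ ≤ max (max 2 (2*C₀)) (max (4*μ) (4 * |lam| * C₀)) :=
    le_max_of_le_right (le_max_right _ _)
  set D := max (max 2 (2*C₀)) (max (4*μ) (4 * |lam| * C₀)) with hDdef
  have hD0 : (0:ℝ) < D := by linarith
  set M := 2*lam^2 + 4 with hMdef
  have hM0 : (0:ℝ) < M := by rw [hMdef]; positivity
  set C := D + 2 + 54*M*(D+2+4*D^2)*D^3 with hCdef
  have hCbig : 0 < 54*M*(D+2+4*D^2)*D^3 := by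
    have h1 : (0:ℝ) < D+2+4*D^2 := by nlinarith
    have := mul_pos (mul_pos (by linarith : (0:ℝ) < 54*M) h1) (pow_pos hD0 3)
    linarith
  have hC0 : (0:ℝ) < C := by rw [hCdef]; linarith
  have hDC : D ≤ C := by rw [hCdef]; linarith
  have h2C : (2:ℝ) ≤ C := by rw [hCdef]; linarith
  clear_value D M C
  refine ⟨C, hC0, ?_⟩
  intro t ht x
  have ht0 : (0:ℝ) < t := by linarith
  set r := Real.sqrt t with hrdef
  have hr1 : (1:ℝ) ≤ r := by
    rw [hrdef, show (1:ℝ) = Real.sqrt 1 from Real.sqrt_one.symm]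
    exact Real.sqrt_le_sqrt ht
  have hr0 : (0:ℝ) < r := by linarith
  have hr2 : r^2 = t := Real.sq_sqrt ht0.le
  have hrt : r ≤ t := by nlinarith
  set z := x - lam*t with hzdef
  clear_value r z
  -- pointwise bound
  have hpt : ∀ s ∈ Set.Icc r t,
      (Real.sqrt (t-s))⁻¹ * Real.exp (-(x - lam*(t-s))^2/(μ*(t-s))) * Real.exp (-s/C₀)
        ≤ (Real.sqrt (t-s))⁻¹ *
            (Real.exp (-r/D) * (Real.exp (-z^2/(D*t)) + Real.exp (-|z|/D))) := by
    intro s hs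
    clear hC0 hDC h2C hCbig hCdef hM0 hMdef hDdef
    clear C M
    rcases eq_or_lt_of_le hs.2 with he | hlt
    · rw [he]; simp
    · have hs1 := hs.1
      have hs0 : (0:ℝ) < s := lt_of_lt_of_le hr0 hs1
      have hts : (0:ℝ) < t - s := by linarith
      rw [mul_assoc]
      refine mul_le_mul_of_nonneg_left ?_ (by positivity)
      by_cases hcase : 2*(|lam| *s) ≤ |z|
      · have h1abs : |lam*s| = |lam| *s := by rw [abs_mul, abs_of_pos hs0]
        have ha2 : 2* |lam*s| ≤ |z| := by rw [h1abs]; exact hcase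
        have hf1 : (0:ℝ) ≤ |z| - 2* |lam*s| := by linarith
        have hf2 : (0:ℝ) ≤ 3* |z| - 2* |lam*s| := by
          have := abs_nonneg z; linarith
        have habs : z^2/4 ≤ (x - lam*(t-s))^2 := by
          have hw : x - lam*(t-s) = z + lam*s := by rw [hzdef]; ring
          rw [hw]
          nlinarith [mul_nonneg hf1 hf2, neg_abs_le (z*(lam*s)), abs_mul z (lam*s),
            sq_abs z, sq_abs (lam*s)]
        have h2 : Real.exp (-(x - lam*(t-s))^2/(μ*(t-s))) ≤ Real.exp (-z^2/(D*t)) := by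
          rw [Real.exp_le_exp, neg_div, neg_div, neg_le_neg_iff]
          calc z^2/(D*t) ≤ (z^2/4)/(μ*(t-s)) := by
                rw [div_le_div_iff₀ (by positivity) (by positivity)]
                nlinarith [mul_nonneg (sq_nonneg z)
                    (mul_nonneg (by linarith : (0:ℝ) ≤ D-4*μ) ht0.le),
                  mul_nonneg (sq_nonneg z) (mul_nonneg hμ.le hs0.le)]
            _ ≤ (x - lam*(t-s))^2/(μ*(t-s)) := by gcongr
        have h1 : Real.exp (-s/C₀) ≤ Real.exp (-r/D) := by
          rw [Real.exp_le_exp, neg_div, neg_div, neg_le_neg_iff,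
            div_le_div_iff₀ hD0 hC₀]
          nlinarith
        calc Real.exp (-(x - lam*(t-s))^2/(μ*(t-s))) * Real.exp (-s/C₀)
            ≤ Real.exp (-z^2/(D*t)) * Real.exp (-r/D) :=
              mul_le_mul h2 h1 (Real.exp_pos _).le (Real.exp_pos _).le
          _ ≤ Real.exp (-r/D) * (Real.exp (-z^2/(D*t)) + Real.exp (-|z|/D)) := by
              nlinarith [mul_pos (Real.exp_pos (-r/D)) (Real.exp_pos (-|z|/D))]
      · push_neg at hcase
        have h1 : Real.exp (-(x - lam*(t-s))^2/(μ*(t-s))) ≤ 1 := by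
          have hle : -(x - lam*(t-s))^2/(μ*(t-s)) ≤ 0 := by
            rw [neg_div]
            exact neg_nonpos_of_nonneg (div_nonneg (sq_nonneg _) (by positivity))
          have := Real.exp_le_exp.mpr hle
          rwa [Real.exp_zero] at this
        have h2 : Real.exp (-s/C₀) ≤ Real.exp (-r/D) * Real.exp (-|z|/D) := by
          rw [← Real.exp_add, Real.exp_le_exp]
          have hlam0 : (0:ℝ) < |lam| := abs_pos.mpr hlam
          have e1 : r/D ≤ s/(2*C₀) := by
            rw [div_le_div_iff₀ hD0 (by positivity)]
            nlinarith
          have e2 : |z|/D ≤ s/(2*C₀) := by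
            rw [div_le_div_iff₀ hD0 (by positivity)]
            nlinarith [abs_nonneg z]
          have e3 : s/(2*C₀) + s/(2*C₀) = s/C₀ := by field_simp; ring
          have : -s/C₀ = -(s/C₀) := neg_div _ _
          rw [this]
          have h4 : -r/D = -(r/D) := neg_div _ _
          have h5 : -|z|/D = -(|z|/D) := neg_div _ _
          rw [h4, h5]
          linarith
        calc Real.exp (-(x - lam*(t-s))^2/(μ*(t-s))) * Real.exp (-s/C₀)
            ≤ 1 * (Real.exp (-r/D) * Real.exp (-|z|/D)) :=
              mul_le_mul h1 h2 (Real.exp_pos _).le (by norm_num)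
          _ = Real.exp (-r/D) * Real.exp (-|z|/D) := one_mul _
          _ ≤ Real.exp (-r/D) * (Real.exp (-z^2/(D*t)) + Real.exp (-|z|/D)) := by
              nlinarith [mul_pos (Real.exp_pos (-r/D)) (Real.exp_pos (-z^2/(D*t)))]
  -- integrability
  have hint1 : IntervalIntegrable (fun s => (Real.sqrt (t-s))⁻¹) volume r t := by
    have base : IntervalIntegrable (fun u : ℝ => u ^ (-(2⁻¹):ℝ)) volume 0 (t - r) :=
      intervalIntegral.intervalIntegrable_rpow' (by norm_num)
    have h2 := (base.comp_sub_left t).symm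
    simp only [sub_zero, sub_sub_cancel] at h2
    have heq : (fun s : ℝ => (Real.sqrt (t-s))⁻¹) = fun s : ℝ => (t-s) ^ (-(2⁻¹):ℝ) :=
      funext fun s => sqrt_inv_eq_rpow _
    rw [heq]
    exact h2
  have hintg : IntervalIntegrable
      (fun s => (Real.sqrt (t-s))⁻¹ *
        (Real.exp (-r/D) * (Real.exp (-z^2/(D*t)) + Real.exp (-|z|/D)))) volume r t :=
    hint1.mul_const _
  have hintf : IntervalIntegrable
      (fun s => (Real.sqrt (t-s))⁻¹ * Real.exp (-(x - lam*(t-s))^2/(μ*(t-s))) *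
        Real.exp (-s/C₀)) volume r t := by
    refine hint1.mono_fun' ?_ ?_
    · apply Measurable.aestronglyMeasurable
      fun_prop
    · refine (ae_restrict_iff' measurableSet_uIoc).mpr (ae_of_all _ fun s hs => ?_)
      rw [Set.uIoc_of_le hrt] at hs
      have hs0 : (0:ℝ) < s := lt_trans hr0 hs.1
      have hts : (0:ℝ) ≤ t - s := by linarith [hs.2]
      simp only [Real.norm_eq_abs]
      rw [abs_of_nonneg (by positivity)]
      have e1 : Real.exp (-(x - lam*(t-s))^2/(μ*(t-s))) ≤ 1 := by
        have hle : -(x - lam*(t-s))^2/(μ*(t-s)) ≤ 0 := by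
          rw [neg_div]
          exact neg_nonpos_of_nonneg (div_nonneg (sq_nonneg _) (by positivity))
        have := Real.exp_le_exp.mpr hle
        rwa [Real.exp_zero] at this
      have e2 : Real.exp (-s/C₀) ≤ 1 := by
        have hle : -s/C₀ ≤ 0 := by
          rw [neg_div]
          exact neg_nonpos_of_nonneg (div_nonneg hs0.le hC₀.le)
        have := Real.exp_le_exp.mpr hle
        rwa [Real.exp_zero] at this
      calc (Real.sqrt (t-s))⁻¹ * Real.exp (-(x - lam*(t-s))^2/(μ*(t-s))) *
            Real.exp (-s/C₀)
          ≤ (Real.sqrt (t-s))⁻¹ * 1 * 1 := by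
            apply mul_le_mul ?_ e2 (Real.exp_pos _).le (by positivity)
            exact mul_le_mul_of_nonneg_left e1 (by positivity)
        _ = (Real.sqrt (t-s))⁻¹ := by ring
  -- the integral bound
  have key : (∫ s in r..t, (Real.sqrt (t-s))⁻¹ *
        Real.exp (-(x - lam*(t-s))^2/(μ*(t-s))) * Real.exp (-s/C₀))
      ≤ 2*r*(Real.exp (-r/D) * (Real.exp (-z^2/(D*t)) + Real.exp (-|z|/D))) := by
    have h1 := intervalIntegral.integral_mono_on hrt hintf hintg hpt
    have hval : (∫ s in r..t, (Real.sqrt (t-s))⁻¹ *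
          (Real.exp (-r/D) * (Real.exp (-z^2/(D*t)) + Real.exp (-|z|/D))))
        = (2*Real.sqrt (t-r)) *
          (Real.exp (-r/D) * (Real.exp (-z^2/(D*t)) + Real.exp (-|z|/D))) := by
      rw [intervalIntegral.integral_mul_const]
      congr 1
      calc (∫ s in r..t, (Real.sqrt (t-s))⁻¹)
          = ∫ s in r..t, (fun u : ℝ => u ^ (-(2⁻¹):ℝ)) (t-s) := by
            simp only [sqrt_inv_eq_rpow]
        _ = ∫ u in (t-t)..(t-r), u ^ (-(2⁻¹):ℝ) :=
            intervalIntegral.integral_comp_sub_left (fun u : ℝ => u ^ (-(2⁻¹):ℝ)) t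
        _ = ∫ u in (0:ℝ)..(t-r), u ^ (-(2⁻¹):ℝ) := by rw [sub_self]
        _ = ((t-r) ^ (-(2⁻¹)+1:ℝ) - (0:ℝ) ^ (-(2⁻¹)+1:ℝ))/(-(2⁻¹)+1) :=
            integral_rpow (Or.inl (by norm_num))
        _ = 2 * Real.sqrt (t-r) := by
            rw [Real.sqrt_eq_rpow]
            rw [show (-(2⁻¹)+1:ℝ) = 1/2 by norm_num]
            rw [Real.zero_rpow (by norm_num)]
            ring
    rw [hval] at h1
    have h3 : Real.sqrt (t-r) ≤ r := by
      rw [hrdef]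
      exact Real.sqrt_le_sqrt (by linarith)
    calc (∫ s in r..t, (Real.sqrt (t-s))⁻¹ *
          Real.exp (-(x - lam*(t-s))^2/(μ*(t-s))) * Real.exp (-s/C₀))
        ≤ (2*Real.sqrt (t-r)) *
          (Real.exp (-r/D) * (Real.exp (-z^2/(D*t)) + Real.exp (-|z|/D))) := h1
      _ ≤ (2*r) * (Real.exp (-r/D) * (Real.exp (-z^2/(D*t)) + Real.exp (-|z|/D))) := by
          apply mul_le_mul_of_nonneg_right (by linarith) (by positivity)
      _ = 2*r*(Real.exp (-r/D) * (Real.exp (-z^2/(D*t)) + Real.exp (-|z|/D))) := by ring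
  constructor
  · -- first bound
    have m1 : Real.exp (-r/D) ≤ Real.exp (-r/C) := by
      rw [Real.exp_le_exp, neg_div, neg_div, neg_le_neg_iff, div_le_div_iff₀ hC0 hD0]
      nlinarith
    have m2 : Real.exp (-z^2/(D*t)) ≤ Real.exp (-z^2/(C*t)) := by
      rw [Real.exp_le_exp, neg_div, neg_div, neg_le_neg_iff,
        div_le_div_iff₀ (by positivity) (by positivity)]
      nlinarith [mul_nonneg (mul_nonneg (sq_nonneg z) (by linarith : (0:ℝ) ≤ C - D)) ht0.le]
    have m3 : Real.exp (-|z|/D) ≤ Real.exp (-|z|/C) := by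
      rw [Real.exp_le_exp, neg_div, neg_div, neg_le_neg_iff, div_le_div_iff₀ hC0 hD0]
      nlinarith [abs_nonneg z]
    calc (∫ s in r..t, (Real.sqrt (t-s))⁻¹ *
          Real.exp (-(x - lam*(t-s))^2/(μ*(t-s))) * Real.exp (-s/C₀))
        ≤ 2*r*(Real.exp (-r/D) * (Real.exp (-z^2/(D*t)) + Real.exp (-|z|/D))) := key
      _ = 2*Real.exp (-r/D) * (Real.exp (-z^2/(D*t)) + Real.exp (-|z|/D)) * r := by ring
      _ ≤ C*Real.exp (-r/C) * (Real.exp (-z^2/(C*t)) + Real.exp (-|z|/C)) * r := by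
          apply mul_le_mul_of_nonneg_right ?_ hr0.le
          apply mul_le_mul ?_ (add_le_add m2 m3) (by positivity) ?_
          · exact mul_le_mul (by linarith) m1 (Real.exp_pos _).le (by linarith)
          · exact mul_nonneg hC0.le (Real.exp_pos _).le
  · -- second bound
    have hy : x - lam*(t+1) = z - lam := by rw [hzdef]; ring
    have ha1 : (1:ℝ) ≤ (x - lam*(t+1))^2 + (t+1) := by
      nlinarith [sq_nonneg (x - lam*(t+1))]
    have ha0 : (0:ℝ) < (x - lam*(t+1))^2 + (t+1) := by linarith
    have hstep : 2*r*(Real.exp (-r/D) * (Real.exp (-z^2/(D*t)) + Real.exp (-|z|/D)))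
        ≤ C / ((x - lam*(t+1))^2 + (t+1)) := by
      rw [le_div_iff₀ ha0]
      have hDt0 : (0:ℝ) < D*t := by positivity
      have f1 : Real.exp (-z^2/(D*t)) * z^2 ≤ D*t := by
        have hu : (0:ℝ) ≤ z^2/(D*t) := by positivity
        have h := mul_exp_neg_le_one hu
        rw [show -(z^2/(D*t)) = -z^2/(D*t) from (neg_div _ _).symm] at h
        rw [div_mul_eq_mul_div, div_le_one hDt0] at h
        nlinarith [Real.exp_pos (-z^2/(D*t))]
      have f3 : Real.exp (-|z|/D) * z^2 ≤ 4*D^2 := by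
        have hu : (0:ℝ) ≤ |z|/D := by positivity
        have h := sq_mul_exp_neg_le hu
        rw [show -(|z|/D) = -|z|/D from (neg_div _ _).symm, div_pow, sq_abs] at h
        rw [div_mul_eq_mul_div, div_le_iff₀ (by positivity : (0:ℝ) < D^2)] at h
        nlinarith
      have f5 : Real.exp (-r/D) * r^3 ≤ 27*D^3 := by
        have hu : (0:ℝ) ≤ r/D := by positivity
        have h := cube_mul_exp_neg_le hu
        rw [show -(r/D) = -r/D from (neg_div _ _).symm, div_pow] at h
        rw [div_mul_eq_mul_div, div_le_iff₀ (by positivity : (0:ℝ) < D^3)] at h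
        nlinarith
      have hA1 : Real.exp (-z^2/(D*t)) ≤ 1 := by
        have hle : -z^2/(D*t) ≤ 0 := by
          rw [neg_div]; exact neg_nonpos_of_nonneg (by positivity)
        have := Real.exp_le_exp.mpr hle
        rwa [Real.exp_zero] at this
      have hB1 : Real.exp (-|z|/D) ≤ 1 := by
        have hle : -|z|/D ≤ 0 := by
          rw [neg_div]; exact neg_nonpos_of_nonneg (by positivity)
        have := Real.exp_le_exp.mpr hle
        rwa [Real.exp_zero] at this
      have hyz : (x - lam*(t+1))^2 + (t+1) ≤ M*(z^2+t) := by
        rw [hy, hMdef]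
        nlinarith [sq_nonneg (z+lam), sq_nonneg z, sq_nonneg lam]
      have hr3 : r ≤ r^3 := by nlinarith
      -- individual monomial bounds
      have q1 : r*Real.exp (-r/D)*(Real.exp (-z^2/(D*t))*z^2) ≤ 27*D^4 := by
        calc r*Real.exp (-r/D)*(Real.exp (-z^2/(D*t))*z^2)
            ≤ r*Real.exp (-r/D)*(D*t) := by
              apply mul_le_mul_of_nonneg_left f1 (by positivity)
          _ = D*(Real.exp (-r/D)*r^3) := by rw [← hr2]; ring
          _ ≤ D*(27*D^3) := mul_le_mul_of_nonneg_left f5 hD0.le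
          _ = 27*D^4 := by ring
      have q2 : r*Real.exp (-r/D)*(Real.exp (-z^2/(D*t))*t) ≤ 27*D^3 := by
        calc r*Real.exp (-r/D)*(Real.exp (-z^2/(D*t))*t)
            ≤ r*Real.exp (-r/D)*(1*t) := by
              apply mul_le_mul_of_nonneg_left ?_ (by positivity)
              exact mul_le_mul_of_nonneg_right hA1 ht0.le
          _ = Real.exp (-r/D)*r^3 := by rw [← hr2]; ring
          _ ≤ 27*D^3 := f5
      have q3 : r*Real.exp (-r/D)*(Real.exp (-|z|/D)*z^2) ≤ 108*D^5 := by
        calc r*Real.exp (-r/D)*(Real.exp (-|z|/D)*z^2)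
            ≤ r*Real.exp (-r/D)*(4*D^2) := by
              apply mul_le_mul_of_nonneg_left f3 (by positivity)
          _ = 4*D^2*(Real.exp (-r/D)*r) := by ring
          _ ≤ 4*D^2*(Real.exp (-r/D)*r^3) := by
              apply mul_le_mul_of_nonneg_left ?_ (by positivity)
              exact mul_le_mul_of_nonneg_left hr3 (Real.exp_pos _).le
          _ ≤ 4*D^2*(27*D^3) := by
              apply mul_le_mul_of_nonneg_left f5 (by positivity)
          _ = 108*D^5 := by ring
      have q4 : r*Real.exp (-r/D)*(Real.exp (-|z|/D)*t) ≤ 27*D^3 := by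
        calc r*Real.exp (-r/D)*(Real.exp (-|z|/D)*t)
            ≤ r*Real.exp (-r/D)*(1*t) := by
              apply mul_le_mul_of_nonneg_left ?_ (by positivity)
              exact mul_le_mul_of_nonneg_right hB1 ht0.le
          _ = Real.exp (-r/D)*r^3 := by rw [← hr2]; ring
          _ ≤ 27*D^3 := f5
      calc 2*r*(Real.exp (-r/D) * (Real.exp (-z^2/(D*t)) + Real.exp (-|z|/D))) *
            ((x - lam*(t+1))^2 + (t+1))
          ≤ 2*r*(Real.exp (-r/D) * (Real.exp (-z^2/(D*t)) + Real.exp (-|z|/D))) *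
            (M*(z^2+t)) := by
            apply mul_le_mul_of_nonneg_left hyz
            have : (0:ℝ) ≤ 2*r := by linarith
            positivity
        _ = 2*M*(r*Real.exp (-r/D)*(Real.exp (-z^2/(D*t))*z^2)
              + r*Real.exp (-r/D)*(Real.exp (-z^2/(D*t))*t)
              + r*Real.exp (-r/D)*(Real.exp (-|z|/D)*z^2)
              + r*Real.exp (-r/D)*(Real.exp (-|z|/D)*t)) := by ring
        _ ≤ 2*M*(27*D^4 + 27*D^3 + 108*D^5 + 27*D^3) := by
            apply mul_le_mul_of_nonneg_left ?_ (by linarith : (0:ℝ) ≤ 2*M)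
            exact add_le_add (add_le_add (add_le_add q1 q2) q3) q4
        _ ≤ C := by
            have hCexp : C = D + 2 + 2*M*(27*D^4 + 27*D^3 + 108*D^5 + 27*D^3) := by
              rw [hCdef]; ring
            linarith
    have h4 : C / ((x - lam*(t+1))^2 + (t+1))
        ≤ C * ((x - lam*(t+1))^2 + (t+1)) ^ (-(3:ℝ)/4) := by
      rw [div_eq_mul_inv]
      apply mul_le_mul_of_nonneg_left ?_ hC0.le
      calc ((x - lam*(t+1))^2 + (t+1))⁻¹
          = ((x - lam*(t+1))^2 + (t+1)) ^ (-1:ℝ) := (Real.rpow_neg_one _).symm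
        _ ≤ ((x - lam*(t+1))^2 + (t+1)) ^ (-(3:ℝ)/4) :=
            Real.rpow_le_rpow_of_exponent_le ha1 (by norm_num)
    exact key.trans (hstep.trans h4)
end
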